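/- arXiv:2104.10798 — 4 statements merged into one kernel-verified Lean document; each statement's English description precedes it below -/
import Mathlib

section
/- Let (Ω, F, (F_t)_{t≥0}) be a filtered measurable space, let H₁ and H₂ be separable real Hilbert spaces with an injective continuous linear embedding ι : H₁ → H₂, and suppose there exists a sequence (h_k)_{k∈ℕ} of continuous linear functionals on H₂ such that ‖f‖_{H₁} = sup_{k∈ℕ} h_k(ι f) for every f ∈ H₁. Let X be an (F_t)_{t≥0}-adapted process with trajectories in C([0,∞), H₂), let α ∈ (0,1), and for x ∈ H₂ set N(x) := sup_{k∈ℕ} h_k(x) ∈ [−∞, +∞]. Define, for t ≥ 0, the pathwise Hölder quantity H_t := sup_{s∈[0,t]} N(X_s) + sup_{0≤s<s'≤t} N(X_{s'} − X_s)/(s' − s)^α ∈ [−∞, +∞]. Then for every L > 1 the random time τ₂ := inf{ t ≥ 0 : H_t > L } (with inf ∅ := +∞) is a stopping time with respect to the right-continuous filtration (F_t^+)_{t≥0}, where F_t^+ := ⋂_{s>t} F_s. -/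
/-!
`t ↦ H_t` is nondecreasing, so `τ₂ < t` iff `H_d > L` for some `d < t` in a countable dense set
of times; hence `{τ₂ < t} ∈ F_t`, and such an optional time is a stopping time of the
right-continuous filtration `F⁺`. The event `{H_t > L}` lies in `F_t` because both suprema in
`H_t` are suprema of lower semicontinuous functions of the time variables (`N` is a supremum of
continuous functionals, `X` has continuous paths and `(s' - s)^(-α)` is continuous and positive
off the diagonal), so they may be taken over a countable dense set of times together with the
endpoint `t`.
-/

open MeasureTheory Filter Set Topology
open scoped ENNReal NNReal

section Semicontinuity

variable {α β : Type*} [TopologicalSpace α] [CompleteLinearOrder β]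

theorem LowerSemicontinuousOn.biSup_inter_dense {f : α → β} {U D : Set α}
    (hf : LowerSemicontinuousOn f U) (hU : IsOpen U) (hD : Dense D) :
    ⨆ x ∈ U ∩ D, f x = ⨆ x ∈ U, f x := by
  refine le_antisymm (biSup_mono fun _ hx => hx.1)
    (iSup₂_le fun x hx => le_of_forall_lt fun c hc => ?_)
  have hcU : ∀ᶠ y in 𝓝 x, c < f y := hU.nhdsWithin_eq hx ▸ hf x hx c hc
  have hev : ∀ᶠ y in 𝓝 x, y ∈ U ∧ c < f y := Filter.Eventually.and (hU.mem_nhds hx) hcU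
  obtain ⟨y, ⟨hyU, hcy⟩, hyD⟩ := mem_closure_iff_nhds.mp (hD x) _ hev
  exact hcy.trans_le (le_iSup₂_of_le y ⟨hyU, hyD⟩ le_rfl)

theorem LowerSemicontinuousOn.lowerSemicontinuous_iSup_mem {f : α → β} {U : Set α}
    (hf : LowerSemicontinuousOn f U) (hU : IsOpen U) :
    LowerSemicontinuous fun x => ⨆ _ : x ∈ U, f x := by
  intro x c (hc : c < ⨆ _ : x ∈ U, f x)
  show ∀ᶠ y in 𝓝 x, c < ⨆ _ : y ∈ U, f y
  by_cases hx : x ∈ U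
  · rw [iSup_pos hx] at hc
    have hcU : ∀ᶠ y in 𝓝 x, c < f y := hU.nhdsWithin_eq hx ▸ hf x hx c hc
    filter_upwards [hU.mem_nhds hx, hcU] with y hy hcy
    rwa [iSup_pos hy]
  · simp [hx] at hc

end Semicontinuity

section MeasurableSupremum

variable {Ω α β : Type*} {m : MeasurableSpace Ω} [TopologicalSpace α]
  [TopologicalSpace.SeparableSpace α] [CompleteLinearOrder β] [TopologicalSpace β]
  [OrderTopology β] [SecondCountableTopology β] [MeasurableSpace β] [BorelSpace β]
  {f : Ω → α → β}

theorem Measurable.biSup_of_lowerSemicontinuousOn {U : Set α} (hU : IsOpen U)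
    (hf : ∀ ω, LowerSemicontinuousOn (f ω) U) (hmeas : ∀ x ∈ U, Measurable fun ω => f ω x) :
    Measurable fun ω => ⨆ x ∈ U, f ω x := by
  obtain ⟨D, hDc, hD⟩ := TopologicalSpace.exists_countable_dense α
  simp_rw [← (hf _).biSup_inter_dense hU hD]
  exact Measurable.biSup _ (hDc.mono inter_subset_right) fun x hx => hmeas x hx.1

theorem Measurable.biSup_Iic_of_lowerSemicontinuousOn [LinearOrder α] [OrderClosedTopology α]
    {u : α} (hf : ∀ ω, LowerSemicontinuousOn (f ω) (Iio u))
    (hmeas : ∀ x ≤ u, Measurable fun ω => f ω x) :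
    Measurable fun ω => ⨆ x ∈ Iic u, f ω x := by
  simp_rw [← Iio_insert, iSup_insert]
  exact (hmeas u le_rfl).max
    (.biSup_of_lowerSemicontinuousOn isOpen_Iio hf fun x hx => hmeas x hx.le)

end MeasurableSupremum

theorem EReal.iSup_coe_mul_coe {ι : Sort*} (b : ι → ℝ) {c : ℝ} (hc : 0 < c) :
    (⨆ i, (b i : EReal)) * c = ⨆ i, ((b i * c : ℝ) : EReal) := by
  have gc : GaloisConnection (· * (c : EReal)) (· / (c : EReal)) := fun _ _ =>
    (EReal.le_div_iff_mul_le (by exact_mod_cast hc) (EReal.coe_ne_top c)).symm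
  simpa only [EReal.coe_mul] using gc.l_iSup

theorem isStoppingTime_rightCont_iInf_mem {Ω : Type*} {m : MeasurableSpace Ω}
    (F : Filtration ℝ≥0 m) {A : ℝ≥0 → Set Ω} (hA : Monotone A)
    (hmeas : ∀ t, MeasurableSet[F t] (A t)) :
    IsStoppingTime (Filtration.rightCont F) fun ω => ⨅ t ∈ {t | ω ∈ A t}, (t : ℝ≥0∞) := by
  refine isStoppingTime_of_measurableSet_lt_of_isRightContinuous fun i => F.le_rightCont i _ ?_
  change MeasurableSet[F i] {ω | ⨅ t ∈ {t | ω ∈ A t}, (t : ℝ≥0∞) < i}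
  obtain ⟨D, hDc, hD⟩ := TopologicalSpace.exists_countable_dense ℝ≥0
  have hlt : {ω | ⨅ t ∈ {t | ω ∈ A t}, (t : ℝ≥0∞) < i} = ⋃ d ∈ D ∩ Iio i, A d := by
    ext ω
    simp only [mem_ofPred_eq, iInf_lt_iff, ENNReal.coe_lt_coe, mem_iUnion, mem_inter_iff, mem_Iio]
    constructor
    · rintro ⟨u, hu, hui⟩
      obtain ⟨d, hdD, hud, hdi⟩ := hD.exists_between hui
      exact ⟨d, ⟨hdD, hdi⟩, hA hud.le hu⟩
    · rintro ⟨d, ⟨-, hdi⟩, hd⟩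
      exact ⟨d, hd, hdi⟩
  rw [hlt]
  exact .biUnion (hDc.mono inter_subset_left) fun d hd => F.mono hd.2.le _ (hmeas d)

theorem continuousOn_sub_mul_inv_rpow_sub {y : ℝ≥0 → ℝ} (hy : Continuous y) (α : ℝ) :
    ContinuousOn (fun p : ℝ≥0 × ℝ≥0 => (y p.2 - y p.1) * (((p.2 : ℝ) - p.1) ^ α)⁻¹)
      {p | p.1 < p.2} := by
  intro p hp
  have hpos : (0 : ℝ) < (p.2 : ℝ) - p.1 := sub_pos.2 hp
  refine ContinuousAt.continuousWithinAt ?_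
  refine ((hy.comp continuous_snd).sub (hy.comp continuous_fst)).continuousAt.mul ?_
  refine ContinuousAt.inv₀ ?_ (Real.rpow_pos_of_pos hpos α).ne'
  exact (by fun_prop : Continuous fun p : ℝ≥0 × ℝ≥0 => (p.2 : ℝ) - p.1).continuousAt.rpow_const
    (Or.inl hpos.ne')

noncomputable section HolderNorm

variable {E : Type*} [NormedAddCommGroup E] [NormedSpace ℝ E]

def supEval (h : ℕ → E →L[ℝ] ℝ) (x : E) : EReal := ⨆ k, ((h k x : ℝ) : EReal)

def holderQuotient (h : ℕ → E →L[ℝ] ℝ) (α : ℝ) (x : ℝ≥0 → E) (s s' : ℝ≥0) : EReal :=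
  supEval h (x s' - x s) * ((((s' : ℝ) - s) ^ α)⁻¹ : ℝ)

def holderNorm (h : ℕ → E →L[ℝ] ℝ) (α : ℝ) (x : ℝ≥0 → E) (t : ℝ≥0) : EReal :=
  (⨆ s ∈ Icc 0 t, supEval h (x s)) +
    ⨆ (s : ℝ≥0) (s' : ℝ≥0) (_ : s < s') (_ : s' ≤ t), holderQuotient h α x s s'

variable (h : ℕ → E →L[ℝ] ℝ) (α : ℝ)

theorem monotone_holderNorm (x : ℝ≥0 → E) : Monotone (holderNorm h α x) := fun _ _ huv =>
  add_le_add (biSup_mono fun _ hs => ⟨hs.1, hs.2.trans huv⟩)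
    (iSup_mono fun _ => iSup_mono fun _ => iSup_mono fun _ =>
      iSup_mono' fun hs' => ⟨hs'.trans huv, le_rfl⟩)

theorem lowerSemicontinuous_supEval : LowerSemicontinuous (supEval h) :=
  lowerSemicontinuous_iSup fun k =>
    (continuous_coe_real_ereal.comp (h k).continuous).lowerSemicontinuous

theorem holderQuotient_eq_iSup (x : ℝ≥0 → E) {s s' : ℝ≥0} (hss' : s < s') :
    holderQuotient h α x s s' =
      ⨆ k, (((h k (x s') - h k (x s)) * (((s' : ℝ) - s) ^ α)⁻¹ : ℝ) : EReal) := by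
  refine (EReal.iSup_coe_mul_coe _
    (inv_pos.2 (Real.rpow_pos_of_pos (sub_pos.2 hss') α))).trans ?_
  simp only [map_sub]
  rfl

theorem lowerSemicontinuousOn_holderQuotient {x : ℝ≥0 → E} (hx : Continuous x) :
    LowerSemicontinuousOn (fun p : ℝ≥0 × ℝ≥0 => holderQuotient h α x p.1 p.2)
      {p | p.1 < p.2} := by
  intro p hp
  have hsup := lowerSemicontinuousOn_iSup (fun k => (continuous_coe_real_ereal.comp_continuousOn
    (continuousOn_sub_mul_inv_rpow_sub ((h k).continuous.comp hx) α)).lowerSemicontinuousOn) p hp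
  refine LowerSemicontinuousWithinAt.congr_of_eventuallyEq hsup hp
    (eventuallyEq_of_mem self_mem_nhdsWithin fun q hq => ?_)
  exact (holderQuotient_eq_iSup h α x hq).symm

theorem lowerSemicontinuousOn_Iio_holderQuotient {x : ℝ≥0 → E} (hx : Continuous x) (s' : ℝ≥0) :
    LowerSemicontinuousOn (fun s => holderQuotient h α x s s') (Iio s') := by
  have := (lowerSemicontinuousOn_holderQuotient h α hx).comp
    (by fun_prop : Continuous fun s => (s, s')).continuousOn fun _ hs => hs
  exact this

theorem lowerSemicontinuousOn_Ioi_holderQuotient {x : ℝ≥0 → E} (hx : Continuous x) (s : ℝ≥0) :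
    LowerSemicontinuousOn (fun s' => holderQuotient h α x s s') (Ioi s) := by
  have := (lowerSemicontinuousOn_holderQuotient h α hx).comp
    (by fun_prop : Continuous fun s' => (s, s')).continuousOn fun _ hs' => hs'
  exact this

theorem lowerSemicontinuous_iSup_Iio_holderQuotient {x : ℝ≥0 → E} (hx : Continuous x) :
    LowerSemicontinuous fun s' => ⨆ s ∈ Iio s', holderQuotient h α x s s' :=
  lowerSemicontinuous_iSup fun s =>
    (lowerSemicontinuousOn_Ioi_holderQuotient h α hx s).lowerSemicontinuous_iSup_mem isOpen_Ioi

end HolderNorm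

section Measurability

variable {Ω E : Type*} {m : MeasurableSpace Ω} [NormedAddCommGroup E] [NormedSpace ℝ E]
  [MeasurableSpace E] [OpensMeasurableSpace E] (h : ℕ → E →L[ℝ] ℝ) (α : ℝ) {X : ℝ≥0 → Ω → E}

theorem measurable_supEval : Measurable (supEval h) :=
  Measurable.iSup fun k => (h k).measurable.coe_real_ereal

theorem measurable_holderQuotient {s s' : ℝ≥0} (hss' : s < s') (hs : Measurable (X s))
    (hs' : Measurable (X s')) : Measurable fun ω => holderQuotient h α (fun t => X t ω) s s' := by
  simp_rw [holderQuotient_eq_iSup h α _ hss']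
  exact Measurable.iSup fun k =>
    ((((h k).measurable.comp hs').sub ((h k).measurable.comp hs)).mul_const _).coe_real_ereal

theorem measurable_holderNorm (hcont : ∀ ω, Continuous fun t => X t ω) {u : ℝ≥0}
    (hX : ∀ s ≤ u, Measurable (X s)) : Measurable fun ω => holderNorm h α (fun t => X t ω) u := by
  have hswap : ∀ x : ℝ≥0 → E, (⨆ (s : ℝ≥0) (s' : ℝ≥0) (_ : s < s') (_ : s' ≤ u),
      holderQuotient h α x s s') = ⨆ s' ∈ Iic u, ⨆ s ∈ Iio s', holderQuotient h α x s s' := by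
    intro x
    simp only [mem_Iic, mem_Iio]
    rw [iSup_comm]
    refine iSup_congr fun s' => ?_
    rw [← iSup_comm]
    exact iSup_congr fun s => iSup_comm
  simp only [holderNorm, hswap, ← bot_eq_zero', Icc_bot]
  refine Measurable.add ?_ ?_
  · exact Measurable.biSup_Iic_of_lowerSemicontinuousOn
      (fun ω => ((lowerSemicontinuous_supEval h).comp (hcont ω)).lowerSemicontinuousOn _)
      fun s hs => (measurable_supEval h).comp (hX s hs)
  · exact Measurable.biSup_Iic_of_lowerSemicontinuousOn
      (fun ω => (lowerSemicontinuous_iSup_Iio_holderQuotient h α (hcont ω)).lowerSemicontinuousOn _)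
      fun s' hs' => Measurable.biSup_of_lowerSemicontinuousOn isOpen_Iio
        (fun ω => lowerSemicontinuousOn_Iio_holderQuotient h α (hcont ω) s')
        fun s hs => measurable_holderQuotient h α hs (hX s (hs.le.trans hs')) (hX s' hs')

end Measurability

theorem stmt_1_general
    {Ω : Type*} {mΩ : MeasurableSpace Ω} (F : Filtration ℝ≥0 mΩ)
    {H₂ : Type*}
    [NormedAddCommGroup H₂] [InnerProductSpace ℝ H₂]
    [MeasurableSpace H₂] [BorelSpace H₂]
    (h : ℕ → (H₂ →L[ℝ] ℝ))
    (X : ℝ≥0 → Ω → H₂)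
    (hadapted : ∀ t : ℝ≥0, Measurable[F t] (X t))
    (hcont : ∀ ω : Ω, Continuous fun t : ℝ≥0 => X t ω)
    (α : ℝ)
    (L : ℝ)
    (N : H₂ → EReal) (hN : ∀ x : H₂, N x = ⨆ k : ℕ, ((h k x : ℝ) : EReal))
    (Hol : ℝ≥0 → Ω → EReal)
    (hHol : ∀ (t : ℝ≥0) (ω : Ω), Hol t ω =
      (⨆ s ∈ Set.Icc (0 : ℝ≥0) t, N (X s ω)) +
        ⨆ (s : ℝ≥0) (s' : ℝ≥0) (_ : s < s') (_ : s' ≤ t),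
          N (X s' ω - X s ω) * (((((s' : ℝ) - (s : ℝ)) ^ α)⁻¹ : ℝ) : EReal))
    (τ : Ω → ℝ≥0∞)
    (hτ : ∀ ω : Ω, τ ω = ⨅ t ∈ {t : ℝ≥0 | (L : EReal) < Hol t ω}, (t : ℝ≥0∞)) :
    ∀ t : ℝ≥0, MeasurableSet[⨅ s ∈ Set.Ioi t, F s] {ω : Ω | τ ω ≤ (t : ℝ≥0∞)} := by
  intro t
  obtain rfl : N = supEval h := funext hN
  obtain rfl : Hol = fun t ω => holderNorm h α (fun s => X s ω) t := funext₂ hHol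
  have hmono : Monotone fun u => {ω | (L : EReal) < holderNorm h α (fun s => X s ω) u} :=
    fun u v huv ω hω => hω.trans_le (monotone_holderNorm h α _ huv)
  have hmeas : ∀ u, MeasurableSet[F u] {ω | (L : EReal) < holderNorm h α (fun s => X s ω) u} :=
    fun u => measurableSet_lt measurable_const <| measurable_holderNorm h α hcont
      fun s hs => (hadapted s).mono (F.mono hs) le_rfl
  have hstop := isStoppingTime_rightCont_iInf_mem F hmono hmeas t
  rw [F.rightCont_eq] at hstop
  simp only [hτ]
  exact hstop

/-- Lemma 4.1 (second stopping time): if `H₁ ↪ H₂` are separable Hilbert spaces whose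
embedding `ι` satisfies `‖f‖_{H₁} = sup_k h_k(ι f)` for a sequence of continuous linear
functionals `(h_k)` on `H₂`, `X` is an adapted process with continuous trajectories in `H₂`
and `α ∈ (0,1)`, then for `L > 1` the time
`τ₂ = inf { t ≥ 0 : sup_{s≤t} N(X_s) + sup_{0≤s<s'≤t} N(X_{s'}−X_s)/(s'−s)^α > L }`, with
`N(x) = sup_k h_k(x)`, is a stopping time with respect to the right-continuous filtration
`F_t⁺ = ⋂_{s>t} F_s`. -/
theorem stmt_1
    {Ω : Type*} {mΩ : MeasurableSpace Ω} (F : Filtration ℝ≥0 mΩ)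
    {H₁ H₂ : Type*}
    [NormedAddCommGroup H₁] [InnerProductSpace ℝ H₁] [CompleteSpace H₁]
    [TopologicalSpace.SeparableSpace H₁]
    [NormedAddCommGroup H₂] [InnerProductSpace ℝ H₂] [CompleteSpace H₂]
    [TopologicalSpace.SeparableSpace H₂]
    [MeasurableSpace H₂] [BorelSpace H₂]
    (ι : H₁ →L[ℝ] H₂) (hι : Function.Injective ι)
    (h : ℕ → (H₂ →L[ℝ] ℝ))
    (hnorm : ∀ f : H₁, (‖f‖ : EReal) = ⨆ k : ℕ, ((h k (ι f) : ℝ) : EReal))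
    (X : ℝ≥0 → Ω → H₂)
    (hadapted : ∀ t : ℝ≥0, Measurable[F t] (X t))
    (hcont : ∀ ω : Ω, Continuous fun t : ℝ≥0 => X t ω)
    (α : ℝ) (hα : α ∈ Set.Ioo (0 : ℝ) 1)
    (L : ℝ) (hL : 1 < L)
    (N : H₂ → EReal) (hN : ∀ x : H₂, N x = ⨆ k : ℕ, ((h k x : ℝ) : EReal))
    (Hol : ℝ≥0 → Ω → EReal)
    (hHol : ∀ (t : ℝ≥0) (ω : Ω), Hol t ω =
      (⨆ s ∈ Set.Icc (0 : ℝ≥0) t, N (X s ω)) +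
        ⨆ (s : ℝ≥0) (s' : ℝ≥0) (_ : s < s') (_ : s' ≤ t),
          N (X s' ω - X s ω) * (((((s' : ℝ) - (s : ℝ)) ^ α)⁻¹ : ℝ) : EReal))
    (τ : Ω → ℝ≥0∞)
    (hτ : ∀ ω : Ω, τ ω = ⨅ t ∈ {t : ℝ≥0 | (L : EReal) < Hol t ω}, (t : ℝ≥0∞)) :
    ∀ t : ℝ≥0, MeasurableSet[⨅ s ∈ Set.Ioi t, F s] {ω : Ω | τ ω ≤ (t : ℝ≥0∞)} :=
  stmt_1_general F h X hadapted hcont α L N hN Hol hHol τ hτ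
end

section
/- Let Λ be a finite set of unit vectors in ℝ³ with Λ = −Λ. For each ξ ∈ Λ let A_ξ ∈ ℝ³ be a unit vector with A_ξ·ξ = 0 and A_{−ξ} = A_ξ, and let B_ξ := (A_ξ + i ξ×A_ξ)/√2 be the associated Beltrami vectors. Let λ ∈ ℝ and let (a_ξ)_{ξ∈Λ} be complex coefficients with a_{−ξ} = conj(a_ξ) for all ξ ∈ Λ. Define W : ℝ³ → ℂ³ by W(x) := Σ_{ξ∈Λ} a_ξ B_ξ e^{iλ ξ·x}. Then W is ℝ³-valued (each component of W(x) has zero imaginary part for every x), div W(x) = 0, and curl W(x) = λ W(x) for every x ∈ ℝ³. -/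
/-!
Differentiating under the finite sum, `∂ⱼ e^{iλ ξ·x} = iλ ξⱼ e^{iλ ξ·x}`, so on the wave with
frequency `ξ` the divergence acts as `iλ ξ·` and the curl as `iλ ξ×`. Since `A ⊥ ξ`, we have
`ξ·B_ξ = 0`, and since moreover `|ξ| = 1`, `ξ × (ξ × A) = -A`, whence `i ξ × B_ξ = B_ξ`; this gives
`div W = 0` and `curl W = λ W`. Finally `conj B_ξ = B_{-ξ}` and `conj e^{iλ ξ·x} = e^{iλ (-ξ)·x}`,
so the symmetry conditions make the reflection `ξ ↦ -ξ` of `Λ` conjugate the sum into itself.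
-/

/-- The Beltrami vector `B = (A + i ξ×A)/√2 ∈ ℂ³` associated with unit vectors
`ξ, A ∈ ℝ³` with `A·ξ = 0`. The cross product is extended ℂ-bilinearly to `ℂ³`. -/
noncomputable def beltrami (ξ A : Fin 3 → ℝ) : Fin 3 → ℂ :=
  fun k =>
    ((A k : ℂ) + Complex.I * crossProduct (fun j => (ξ j : ℂ)) (fun j => (A j : ℂ)) k) /
      (Real.sqrt 2 : ℂ)

/-- The partial derivative `∂_j f` of a complex-valued function on `ℝ³`. -/
noncomputable def pdC (j : Fin 3) (f : (Fin 3 → ℝ) → ℂ) (x : Fin 3 → ℝ) : ℂ :=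
  fderiv ℝ f x (Pi.single j 1)

/-- The divergence `div F = ∂₁F₁ + ∂₂F₂ + ∂₃F₃` of a map `F : ℝ³ → ℂ³`. -/
noncomputable def divC (F : (Fin 3 → ℝ) → Fin 3 → ℂ) (x : Fin 3 → ℝ) : ℂ :=
  ∑ j, pdC j (fun y => F y j) x

/-- The curl `curl F = (∂₂F₃ − ∂₃F₂, ∂₃F₁ − ∂₁F₃, ∂₁F₂ − ∂₂F₁)` of a map `F : ℝ³ → ℂ³`. -/
noncomputable def curlC (F : (Fin 3 → ℝ) → Fin 3 → ℂ) (x : Fin 3 → ℝ) : Fin 3 → ℂ :=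
  ![pdC 1 (fun y => F y 2) x - pdC 2 (fun y => F y 1) x,
    pdC 2 (fun y => F y 0) x - pdC 0 (fun y => F y 2) x,
    pdC 0 (fun y => F y 1) x - pdC 1 (fun y => F y 0) x]

open Complex Finset Matrix

lemma ofReal_dotProduct_ofReal (u v : Fin 3 → ℝ) :
    (fun j => (u j : ℂ)) ⬝ᵥ (fun j => (v j : ℂ)) = ((u ⬝ᵥ v : ℝ) : ℂ) := by
  simp [dotProduct]

lemma beltrami_eq_smul (ξ A : Fin 3 → ℝ) :
    beltrami ξ A = ((Real.sqrt 2 : ℂ))⁻¹ •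
      ((fun j => (A j : ℂ)) + I • (fun j => (ξ j : ℂ)) ⨯₃ (fun j => (A j : ℂ))) := by
  ext k
  simp [beltrami, div_eq_inv_mul]

lemma dotProduct_beltrami {ξ A : Fin 3 → ℝ} (hA : A ⬝ᵥ ξ = 0) :
    (fun j => (ξ j : ℂ)) ⬝ᵥ beltrami ξ A = 0 := by
  rw [beltrami_eq_smul, dotProduct_smul, dotProduct_add, dotProduct_smul, dot_self_cross,
    ofReal_dotProduct_ofReal, dotProduct_comm, hA]
  simp

lemma I_smul_cross_beltrami {ξ A : Fin 3 → ℝ} (hξ : ξ ⬝ᵥ ξ = 1) (hA : A ⬝ᵥ ξ = 0) :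
    I • (fun j => (ξ j : ℂ)) ⨯₃ beltrami ξ A = beltrami ξ A := by
  rw [beltrami_eq_smul, map_smul, map_add, map_smul, cross_cross_eq_smul_sub_smul',
    ofReal_dotProduct_ofReal, ofReal_dotProduct_ofReal, dotProduct_comm, hA, hξ]
  match_scalars <;> grind [I_sq]

lemma star_beltrami (ξ A : Fin 3 → ℝ) (k : Fin 3) :
    starRingEnd ℂ (beltrami ξ A k) = beltrami (-ξ) A k := by
  fin_cases k <;> simp [beltrami, cross_apply, map_div₀] <;> ring

noncomputable def phase (lam : ℝ) (ξ : Fin 3 → ℝ) : (Fin 3 → ℝ) →L[ℝ] ℂ :=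
  (I * lam) • ∑ j, (ξ j : ℂ) • ofRealCLM.comp (ContinuousLinearMap.proj j)

lemma phase_apply (lam : ℝ) (ξ y : Fin 3 → ℝ) :
    phase lam ξ y = I * lam * ∑ j, (ξ j : ℂ) * (y j : ℂ) := by
  simp [phase, mul_sum]

lemma phase_single (lam : ℝ) (ξ : Fin 3 → ℝ) (j : Fin 3) :
    phase lam ξ (Pi.single j 1) = I * lam * ξ j := by
  simp [phase_apply, Pi.single_apply, apply_ite ofReal]

lemma star_exp_phase (lam : ℝ) (ξ x : Fin 3 → ℝ) :
    starRingEnd ℂ (exp (phase lam ξ x)) = exp (phase lam (-ξ) x) := by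
  simp [← exp_conj, phase_apply]

section PlaneWaves

variable {Λ : Finset (Fin 3 → ℝ)} {lam : ℝ} {x : Fin 3 → ℝ}

lemma pdC_sum_mul_exp_phase (c : (Fin 3 → ℝ) → ℂ) (j : Fin 3) :
    pdC j (fun y => ∑ ξ ∈ Λ, c ξ * exp (phase lam ξ y)) x =
      ∑ ξ ∈ Λ, I * lam * ξ j * (c ξ * exp (phase lam ξ x)) := by
  have hderiv : HasFDerivAt (fun y => ∑ ξ ∈ Λ, c ξ * exp (phase lam ξ y))
      (∑ ξ ∈ Λ, c ξ • exp (phase lam ξ x) • phase lam ξ) x :=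
    HasFDerivAt.fun_sum fun ξ _ => ((phase lam ξ).hasFDerivAt.cexp).const_mul (c ξ)
  rw [pdC, hderiv.fderiv]
  simp only [_root_.sum_apply, _root_.smul_apply, phase_single, smul_eq_mul]
  exact sum_congr rfl fun ξ _ => by ring

lemma im_sum_mul_exp_phase_eq_zero (hΛ : ∀ ξ ∈ Λ, -ξ ∈ Λ) {c : (Fin 3 → ℝ) → ℂ}
    (hc : ∀ ξ ∈ Λ, c (-ξ) = starRingEnd ℂ (c ξ)) :
    (∑ ξ ∈ Λ, c ξ * exp (phase lam ξ x)).im = 0 := by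
  rw [← conj_eq_iff_im, map_sum]
  refine sum_nbij' (fun ξ => -ξ) (fun ξ => -ξ) hΛ hΛ (fun ξ _ => neg_neg ξ)
    (fun ξ _ => neg_neg ξ) fun ξ hξ => ?_
  rw [map_mul, star_exp_phase, hc ξ hξ]

lemma divC_sum_mul_exp_phase (v : (Fin 3 → ℝ) → Fin 3 → ℂ) :
    divC (fun y k => ∑ ξ ∈ Λ, v ξ k * exp (phase lam ξ y)) x =
      ∑ ξ ∈ Λ, I * lam * ((fun j => (ξ j : ℂ)) ⬝ᵥ v ξ) * exp (phase lam ξ x) := by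
  simp only [divC, pdC_sum_mul_exp_phase]
  rw [sum_comm]
  refine sum_congr rfl fun ξ _ => ?_
  simp only [dotProduct, mul_sum, sum_mul]
  exact sum_congr rfl fun j _ => by ring

lemma curlC_sum_mul_exp_phase (v : (Fin 3 → ℝ) → Fin 3 → ℂ) (k : Fin 3) :
    curlC (fun y k => ∑ ξ ∈ Λ, v ξ k * exp (phase lam ξ y)) x k =
      ∑ ξ ∈ Λ, I * lam * ((fun j => (ξ j : ℂ)) ⨯₃ v ξ) k * exp (phase lam ξ x) := by
  fin_cases k <;>
    simp only [curlC, pdC_sum_mul_exp_phase, ← sum_sub_distrib, cross_apply, Fin.zero_eta,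
      Fin.mk_one, Fin.reduceFinMk, Matrix.cons_val] <;>
    exact sum_congr rfl fun ξ _ => by ring

end PlaneWaves

theorem stmt_4_general (Λ : Finset (Fin 3 → ℝ))
    (hΛunit : ∀ ξ ∈ Λ, ∑ k, ξ k ^ 2 = 1) (hΛsym : ∀ ξ ∈ Λ, -ξ ∈ Λ)
    (A : (Fin 3 → ℝ) → Fin 3 → ℝ)
    (hAperp : ∀ ξ ∈ Λ, ∑ k, A ξ k * ξ k = 0)
    (hAeven : ∀ ξ ∈ Λ, A (-ξ) = A ξ)
    (a : (Fin 3 → ℝ) → ℂ) (ha : ∀ ξ ∈ Λ, a (-ξ) = starRingEnd ℂ (a ξ))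
    (lam : ℝ)
    (W : (Fin 3 → ℝ) → Fin 3 → ℂ)
    (hW : ∀ x k, W x k = ∑ ξ ∈ Λ,
      a ξ * beltrami ξ (A ξ) k * Complex.exp (Complex.I * (lam : ℂ) * ∑ j, (ξ j : ℂ) * (x j : ℂ))) :
    (∀ x k, (W x k).im = 0) ∧
    (∀ x, divC W x = 0) ∧
    (∀ x k, curlC W x k = (lam : ℂ) * W x k) := by
  obtain rfl : W = fun x k => ∑ ξ ∈ Λ, (a ξ • beltrami ξ (A ξ)) k * exp (phase lam ξ x) := by
    funext x k
    simp only [hW, phase_apply, Pi.smul_apply, smul_eq_mul]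
  refine ⟨fun x k => ?_, fun x => ?_, fun x k => ?_⟩
  · refine im_sum_mul_exp_phase_eq_zero hΛsym fun ξ hξ => ?_
    simp [ha ξ hξ, hAeven ξ hξ, star_beltrami]
  · rw [divC_sum_mul_exp_phase]
    refine sum_eq_zero fun ξ hξ => ?_
    rw [dotProduct_smul, dotProduct_beltrami (hAperp ξ hξ), smul_zero, mul_zero, zero_mul]
  · rw [curlC_sum_mul_exp_phase, mul_sum]
    refine sum_congr rfl fun ξ hξ => ?_
    have hξ1 : ξ ⬝ᵥ ξ = 1 := by simpa [dotProduct, sq] using hΛunit ξ hξ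
    have hB := congrFun (I_smul_cross_beltrami hξ1 (hAperp ξ hξ)) k
    simp only [map_smul, Pi.smul_apply, smul_eq_mul] at hB ⊢
    linear_combination (lam * a ξ * exp (phase lam ξ x)) * hB

/-- A linear combination `W(x) = Σ_{ξ∈Λ} a_ξ B_ξ e^{iλ ξ·x}` of Beltrami waves with
`a_{-ξ} = conj(a_ξ)` is `ℝ³`-valued, divergence-free and satisfies `curl W = λ W`. -/
theorem stmt_4 (Λ : Finset (Fin 3 → ℝ))
    (hΛunit : ∀ ξ ∈ Λ, ∑ k, ξ k ^ 2 = 1) (hΛsym : ∀ ξ ∈ Λ, -ξ ∈ Λ)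
    (A : (Fin 3 → ℝ) → Fin 3 → ℝ)
    (hAunit : ∀ ξ ∈ Λ, ∑ k, A ξ k ^ 2 = 1)
    (hAperp : ∀ ξ ∈ Λ, ∑ k, A ξ k * ξ k = 0)
    (hAeven : ∀ ξ ∈ Λ, A (-ξ) = A ξ)
    (a : (Fin 3 → ℝ) → ℂ) (ha : ∀ ξ ∈ Λ, a (-ξ) = starRingEnd ℂ (a ξ))
    (lam : ℝ)
    (W : (Fin 3 → ℝ) → Fin 3 → ℂ)
    (hW : ∀ x k, W x k = ∑ ξ ∈ Λ,
      a ξ * beltrami ξ (A ξ) k * Complex.exp (Complex.I * (lam : ℂ) * ∑ j, (ξ j : ℂ) * (x j : ℂ))) :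
    (∀ x k, (W x k).im = 0) ∧
    (∀ x, divC W x = 0) ∧
    (∀ x k, curlC W x k = (lam : ℂ) * W x k) :=
  stmt_4_general Λ hΛunit hΛsym A hAperp hAeven a ha lam W hW
end

section
/- Let ξ, ξ′ ∈ ℝ³ be unit vectors, let A, A′ ∈ ℝ³ be unit vectors with A·ξ = 0 and A′·ξ′ = 0, let B := (A + i ξ×A)/√2 and B′ := (A′ + i ξ′×A′)/√2 be the associated Beltrami vectors, let λ ∈ ℝ, and define W(x) := B e^{iλ ξ·x} and W′(x) := B′ e^{iλ ξ′·x}. Then for every i ∈ {1,2,3} and x ∈ ℝ³, Σ_{j=1}^{3} ∂_j ( W_i W′_j + W′_i W_j )(x) = ∂_i ( Σ_{k=1}^{3} W_k W′_k )(x); that is, div( W ⊗ W′ + W′ ⊗ W ) = ∇( W · W′ ), where the dot product on ℂ³ is bilinear (without conjugation). -/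
open Matrix

theorem cross_add_smul_cross_eq_smul {R : Type*} [CommRing R] {ι : R} (hι : ι * ι = -1)
    {u a : Fin 3 → R} (huu : u ⬝ᵥ u = 1) (hua : u ⬝ᵥ a = 0) :
    u ⨯₃ (a + ι • u ⨯₃ a) = -ι • (a + ι • u ⨯₃ a) := by
  rw [map_add, map_smul, cross_cross_eq_smul_sub_smul', hua, huu, smul_add, smul_smul,
    neg_mul, hι]
  module

theorem smul_add_smul_eq_of_cross_eq_smul {R : Type*} [CommRing R] {c : R}
    {u u' b b' : Fin 3 → R} (hb : u ⨯₃ b = c • b) (hb' : u' ⨯₃ b' = c • b') :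
    (b' ⬝ᵥ u) • b + (b ⬝ᵥ u') • b' = (b ⬝ᵥ b') • (u + u') := by
  have e := cross_cross_eq_smul_sub_smul' b u' b'
  have e' := cross_cross_eq_smul_sub_smul' b' u b
  rw [hb', map_smul, dotProduct_comm u'] at e
  rw [hb, map_smul, ← cross_anticomm, dotProduct_comm b', dotProduct_comm u] at e'
  linear_combination (norm := module) e + e'

theorem sum_symm_mul_add_eq_of_cross_eq_smul {R : Type*} [CommRing R] {c : R}
    {u u' b b' : Fin 3 → R} (hb : u ⨯₃ b = c • b) (hb' : u' ⨯₃ b' = c • b')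
    (hub : u ⬝ᵥ b = 0) (hub' : u' ⬝ᵥ b' = 0) (i : Fin 3) :
    ∑ j, (b i * b' j + b' i * b j) * (u j + u' j) = (b ⬝ᵥ b') * (u i + u' i) := by
  have h := congrFun (smul_add_smul_eq_of_cross_eq_smul hb hb') i
  simp only [Pi.add_apply, Pi.smul_apply, smul_eq_mul] at h
  simp only [dotProduct, Fin.sum_univ_three] at h hub hub' ⊢
  linear_combination h + b i * hub' + b' i * hub

theorem ofReal_comp_dotProduct {n : Type*} [Fintype n] (v w : n → ℝ) :
    (Complex.ofReal ∘ v) ⬝ᵥ (Complex.ofReal ∘ w) = ((v ⬝ᵥ w : ℝ) : ℂ) :=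
  (RingHom.map_dotProduct Complex.ofRealHom v w).symm

theorem beltrami_eq (ξ A : Fin 3 → ℝ) :
    beltrami ξ A = (Real.sqrt 2 : ℂ)⁻¹ •
      (Complex.ofReal ∘ A + Complex.I • (Complex.ofReal ∘ ξ) ⨯₃ (Complex.ofReal ∘ A)) := by
  ext k
  simp [beltrami, div_eq_inv_mul, Function.comp_def]

theorem pdC_const_mul_exp (ν : Fin 3 → ℂ) (c : ℂ) (j : Fin 3) (x : Fin 3 → ℝ) :
    pdC j (fun y => c * Complex.exp (∑ k, ν k * (y k : ℂ))) x
      = c * ν j * Complex.exp (∑ k, ν k * (x k : ℂ)) := by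
  let L : (Fin 3 → ℝ) →L[ℝ] ℂ :=
    ∑ k, ν k • Complex.ofRealCLM.comp (ContinuousLinearMap.proj k)
  have hL : ∀ y, L y = ∑ k, ν k * (y k : ℂ) := fun y => by simp [L]
  simp_rw [pdC, ← hL, (L.hasFDerivAt.cexp.const_mul c).fderiv]
  simp [L, Pi.single_apply, apply_ite Complex.ofReal]
  ring

section Beltrami

variable {ξ A : Fin 3 → ℝ}

theorem cross_beltrami (hξ : ξ ⬝ᵥ ξ = 1) (hAξ : A ⬝ᵥ ξ = 0) :
    (Complex.ofReal ∘ ξ) ⨯₃ beltrami ξ A = -Complex.I • beltrami ξ A := by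
  have huu : (Complex.ofReal ∘ ξ) ⬝ᵥ (Complex.ofReal ∘ ξ) = 1 := by
    rw [ofReal_comp_dotProduct, hξ, Complex.ofReal_one]
  have hua : (Complex.ofReal ∘ ξ) ⬝ᵥ (Complex.ofReal ∘ A) = 0 := by
    rw [ofReal_comp_dotProduct, dotProduct_comm, hAξ, Complex.ofReal_zero]
  rw [beltrami_eq, map_smul, cross_add_smul_cross_eq_smul Complex.I_mul_I huu hua, smul_comm]

theorem dotProduct_beltrami_s7 (hAξ : A ⬝ᵥ ξ = 0) :
    (Complex.ofReal ∘ ξ) ⬝ᵥ beltrami ξ A = 0 := by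
  rw [beltrami_eq, dotProduct_smul, dotProduct_add, dotProduct_smul, dot_self_cross,
    ofReal_comp_dotProduct, dotProduct_comm, hAξ]
  simp

end Beltrami

theorem stmt_7_general (ξ ξ' A A' : Fin 3 → ℝ) (lam : ℝ)
    (hξ : ∑ k, ξ k ^ 2 = 1) (hξ' : ∑ k, ξ' k ^ 2 = 1)
    (hAξ : ∑ k, A k * ξ k = 0) (hAξ' : ∑ k, A' k * ξ' k = 0)
    (W W' : (Fin 3 → ℝ) → Fin 3 → ℂ)
    (hW : ∀ x k, W x k =
      beltrami ξ A k * Complex.exp (Complex.I * (lam : ℂ) * ∑ j, (ξ j : ℂ) * (x j : ℂ)))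
    (hW' : ∀ x k, W' x k =
      beltrami ξ' A' k * Complex.exp (Complex.I * (lam : ℂ) * ∑ j, (ξ' j : ℂ) * (x j : ℂ))) :
    ∀ (i : Fin 3) (x : Fin 3 → ℝ),
      ∑ j, pdC j (fun y => W y i * W' y j + W' y i * W y j) x =
        pdC i (fun y => ∑ k, W y k * W' y k) x := by
  intro i x
  simp only [sq] at hξ hξ'
  have key := sum_symm_mul_add_eq_of_cross_eq_smul (cross_beltrami hξ hAξ)
    (cross_beltrami hξ' hAξ') (dotProduct_beltrami_s7 hAξ) (dotProduct_beltrami_s7 hAξ') i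
  let ν : Fin 3 → ℂ := (Complex.I * lam) • (Complex.ofReal ∘ ξ + Complex.ofReal ∘ ξ')
  have hWW : ∀ y k l, W y k * W' y l =
      beltrami ξ A k * beltrami ξ' A' l * Complex.exp (∑ m, ν m * (y m : ℂ)) := by
    intro y k l
    rw [hW, hW', mul_mul_mul_comm, ← Complex.exp_add]
    congr 2
    simp only [ν, Fin.sum_univ_three, Pi.smul_apply, Pi.add_apply, Function.comp_apply,
      smul_eq_mul]
    ring
  simp_rw [mul_comm (W' _ _), hWW, ← add_mul, ← Finset.sum_mul, pdC_const_mul_exp]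
  generalize Complex.exp (∑ k, ν k * (x k : ℂ)) = E
  simp only [ν, Fin.sum_univ_three, dotProduct, Pi.smul_apply, Pi.add_apply,
    Function.comp_apply, smul_eq_mul] at key ⊢
  linear_combination (Complex.I * lam * E) * key

/-- For two Beltrami waves `W, W'` with the same frequency `λ` one has
`div(W ⊗ W' + W' ⊗ W) = ∇(W · W')`, the dot product being bilinear (no conjugation). -/
theorem stmt_7 (ξ ξ' A A' : Fin 3 → ℝ) (lam : ℝ)
    (hξ : ∑ k, ξ k ^ 2 = 1) (hξ' : ∑ k, ξ' k ^ 2 = 1)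
    (hA : ∑ k, A k ^ 2 = 1) (hA' : ∑ k, A' k ^ 2 = 1)
    (hAξ : ∑ k, A k * ξ k = 0) (hAξ' : ∑ k, A' k * ξ' k = 0)
    (W W' : (Fin 3 → ℝ) → Fin 3 → ℂ)
    (hW : ∀ x k, W x k =
      beltrami ξ A k * Complex.exp (Complex.I * (lam : ℂ) * ∑ j, (ξ j : ℂ) * (x j : ℂ)))
    (hW' : ∀ x k, W' x k =
      beltrami ξ' A' k * Complex.exp (Complex.I * (lam : ℂ) * ∑ j, (ξ' j : ℂ) * (x j : ℂ))) :
    ∀ (i : Fin 3) (x : Fin 3 → ℝ),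
      ∑ j, pdC j (fun y => W y i * W' y j + W' y i * W y j) x =
        pdC i (fun y => ∑ k, W y k * W' y k) x :=
  stmt_7_general ξ ξ' A A' lam hξ hξ' hAξ hAξ' W W' hW hW'
end

section
/- There exist r₀ > 0, pairwise disjoint finite sets Λ₀, Λ₁ of unit vectors in ℝ³ with rational coordinates, having the same cardinality and satisfying Λ_α = −Λ_α for α ∈ {0,1}, and for each α ∈ {0,1} and each ξ ∈ Λ_α a function γ_ξ^{(α)} defined on the closed ball (in the space of symmetric real 3×3 matrices, with respect to the Frobenius norm) of radius r₀ centered at the identity matrix, such that: each γ_ξ^{(α)} is strictly positive and infinitely differentiable on this closed ball; γ_{−ξ}^{(α)} = γ_ξ^{(α)} for all ξ ∈ Λ_α; and for every symmetric real 3×3 matrix R with ‖R − Id‖ ≤ r₀ one has R = (1/2) Σ_{ξ∈Λ_α} ( γ_ξ^{(α)}(R) )² ( Id − ξ ⊗ ξ ), for each α ∈ {0,1}. -/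
/-- The Frobenius norm of a real 3×3 matrix (viewed as `Fin 3 → Fin 3 → ℝ`). -/
noncomputable def frobNorm (R : Fin 3 → Fin 3 → ℝ) : ℝ :=
  Real.sqrt (∑ k, ∑ l, R k l ^ 2)

/-- The 3×3 identity matrix (viewed as `Fin 3 → Fin 3 → ℝ`). -/
def idMat : Fin 3 → Fin 3 → ℝ := fun k l => if k = l then 1 else 0

/-- Integer numerators of the direction vectors. -/
def wtab : Fin 2 → Fin 24 → Fin 3 → ℤ :=
  ![![![-4, -3, 0], ![-4, 0, -3], ![-4, 0, 3], ![-4, 3, 0], ![-3, -4, 0], ![-3, 0, -4], ![-3, 0, 4], ![-3, 4, 0], ![0, -4, -3], ![0, -4, 3], ![0, -3, -4], ![0, -3, 4], ![0, 3, -4], ![0, 3, 4], ![0, 4, -3], ![0, 4, 3], ![3, -4, 0], ![3, 0, -4], ![3, 0, 4], ![3, 4, 0], ![4, -3, 0], ![4, 0, -3], ![4, 0, 3], ![4, 3, 0]],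
    ![![-12, -5, 0], ![-12, 0, -5], ![-12, 0, 5], ![-12, 5, 0], ![-5, -12, 0], ![-5, 0, -12], ![-5, 0, 12], ![-5, 12, 0], ![0, -12, -5], ![0, -12, 5], ![0, -5, -12], ![0, -5, 12], ![0, 5, -12], ![0, 5, 12], ![0, 12, -5], ![0, 12, 5], ![5, -12, 0], ![5, 0, -12], ![5, 0, 12], ![5, 12, 0], ![12, -5, 0], ![12, 0, -5], ![12, 0, 5], ![12, 5, 0]]]

/-- Denominators. -/
def denv : Fin 2 → ℤ := ![5, 13]

/-- The actual unit vectors. -/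
noncomputable def Vvec : Fin 2 → Fin 24 → (Fin 3 → ℝ) :=
  fun α i k => (wtab α i k : ℝ) / (denv α : ℝ)

noncomputable def Lam : Fin 2 → Finset (Fin 3 → ℝ) :=
  fun α => Finset.image (Vvec α) Finset.univ

noncomputable def Ac : Fin 2 → ℝ := ![481/1544, 24961/142088]
noncomputable def Bc : Fin 2 → ℝ := ![-625/772, -28561/71044]
noncomputable def Ec : Fin 2 → ℝ := ![-625/576, -28561/14400]

noncomputable def gfun : Fin 2 → (Fin 3 → ℝ) → (Fin 3 → Fin 3 → ℝ) → ℝ :=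
  fun α ξ R =>
    Ac α * (R 0 0 + R 1 1 + R 2 2)
    + Bc α * (ξ 0 ^ 2 * R 0 0 + ξ 1 ^ 2 * R 1 1 + ξ 2 ^ 2 * R 2 2)
    + Ec α * (ξ 0 * ξ 1 * R 0 1 + ξ 0 * ξ 2 * R 0 2 + ξ 1 * ξ 2 * R 1 2)

noncomputable def gam : Fin 2 → (Fin 3 → ℝ) → (Fin 3 → Fin 3 → ℝ) → ℝ :=
  fun α ξ R => Real.sqrt (gfun α ξ R)

lemma denv_pos (α : Fin 2) : (0:ℝ) < (denv α : ℝ) := by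
  fin_cases α <;> norm_num [denv]

lemma wtab_inj : ∀ α : Fin 2, ∀ i j : Fin 24, wtab α i = wtab α j → i = j := by decide

lemma wtab_norm : ∀ α : Fin 2, ∀ i : Fin 24,
    (wtab α i 0)^2 + (wtab α i 1)^2 + (wtab α i 2)^2 = (denv α)^2 := by decide

lemma wtab_neg : ∀ α : Fin 2, ∀ i : Fin 24, ∃ j : Fin 24, ∀ k, wtab α j k = -(wtab α i k) := by
  decide

lemma wtab_disj : ∀ i j : Fin 24, ¬ (∀ k, 13 * wtab 0 i k = 5 * wtab 1 j k) := by decide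

lemma Vvec_inj (α : Fin 2) : Function.Injective (Vvec α) := by
  intro i j h
  apply wtab_inj α
  funext k
  have hk := congrFun h k
  have hd := (denv_pos α).ne'
  simp only [Vvec, div_left_inj' hd] at hk
  exact_mod_cast hk

lemma Vvec_norm (α : Fin 2) (i : Fin 24) :
    (Vvec α i 0)^2 + (Vvec α i 1)^2 + (Vvec α i 2)^2 = 1 := by
  have h := wtab_norm α i
  have hd := (denv_pos α).ne'
  have h2 : ((wtab α i 0 : ℝ))^2 + ((wtab α i 1 : ℝ))^2 + ((wtab α i 2 : ℝ))^2
      = ((denv α : ℝ))^2 := by exact_mod_cast h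
  simp only [Vvec, div_pow]
  rw [← add_div, ← add_div, div_eq_one_iff_eq (pow_ne_zero 2 hd)]
  linarith [h2]

/-- each entry is bounded by the Frobenius norm. -/
lemma entry_le_frob (S : Fin 3 → Fin 3 → ℝ) (k l : Fin 3) : |S k l| ≤ frobNorm S := by
  have h1 : (S k l)^2 ≤ ∑ l', (S k l')^2 :=
    Finset.single_le_sum (f := fun l' => (S k l')^2) (fun i _ => sq_nonneg _) (Finset.mem_univ l)
  have h2 : (∑ l', (S k l')^2) ≤ ∑ k', ∑ l', (S k' l')^2 :=
    Finset.single_le_sum (f := fun k' => ∑ l', (S k' l')^2)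
      (fun i _ => Finset.sum_nonneg fun j _ => sq_nonneg _) (Finset.mem_univ k)
  calc |S k l| = Real.sqrt ((S k l)^2) := (Real.sqrt_sq_eq_abs _).symm
    _ ≤ frobNorm S := Real.sqrt_le_sqrt (by linarith)

lemma entry_bound {R : Fin 3 → Fin 3 → ℝ} (h : frobNorm (R - idMat) ≤ 1/100)
    (k l : Fin 3) : |R k l - idMat k l| ≤ 1/100 := by
  have := entry_le_frob (R - idMat) k l
  simp only [Pi.sub_apply] at this
  linarith

set_option maxHeartbeats 1000000 in
lemma gfun_pos (α : Fin 2) {ξ : Fin 3 → ℝ}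
    (hn : ξ 0 ^ 2 + ξ 1 ^ 2 + ξ 2 ^ 2 = 1) {R : Fin 3 → Fin 3 → ℝ}
    (hb : frobNorm (R - idMat) ≤ 1/100) : 0 < gfun α ξ R := by
  have h00 := abs_le.1 (entry_bound hb 0 0)
  have h11 := abs_le.1 (entry_bound hb 1 1)
  have h22 := abs_le.1 (entry_bound hb 2 2)
  have h01 := abs_le.1 (entry_bound hb 0 1)
  have h02 := abs_le.1 (entry_bound hb 0 2)
  have h12 := abs_le.1 (entry_bound hb 1 2)
  rw [show idMat 0 0 = 1 from rfl] at h00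
  rw [show idMat 1 1 = 1 from rfl] at h11
  rw [show idMat 2 2 = 1 from rfl] at h22
  rw [show idMat 0 1 = 0 from rfl] at h01
  rw [show idMat 0 2 = 0 from rfl] at h02
  rw [show idMat 1 2 = 0 from rfl] at h12
  have s0 : (0:ℝ) ≤ ξ 0 ^ 2 := sq_nonneg _
  have s1 : (0:ℝ) ≤ ξ 1 ^ 2 := sq_nonneg _
  have s2 : (0:ℝ) ≤ ξ 2 ^ 2 := sq_nonneg _
  have u01a : ξ 0 * ξ 1 ≤ 1 := by nlinarith [sq_nonneg (ξ 0 - ξ 1)]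
  have u01b : -1 ≤ ξ 0 * ξ 1 := by nlinarith [sq_nonneg (ξ 0 + ξ 1)]
  have u02a : ξ 0 * ξ 2 ≤ 1 := by nlinarith [sq_nonneg (ξ 0 - ξ 2)]
  have u02b : -1 ≤ ξ 0 * ξ 2 := by nlinarith [sq_nonneg (ξ 0 + ξ 2)]
  have u12a : ξ 1 * ξ 2 ≤ 1 := by nlinarith [sq_nonneg (ξ 1 - ξ 2)]
  have u12b : -1 ≤ ξ 1 * ξ 2 := by nlinarith [sq_nonneg (ξ 1 + ξ 2)]
  fin_cases α <;>
    · simp only [gfun, Ac, Bc, Ec, Fin.mk_zero, Fin.mk_one, Fin.isValue, Matrix.cons_val_zero,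
        Matrix.cons_val_one, Matrix.head_cons]
      linarith [mul_nonneg s0 (by linarith : (0:ℝ) ≤ 1/100 - (R 0 0 - 1)),
        mul_nonneg s0 (by linarith : (0:ℝ) ≤ R 0 0 - 1 + 1/100),
        mul_nonneg s1 (by linarith : (0:ℝ) ≤ 1/100 - (R 1 1 - 1)),
        mul_nonneg s1 (by linarith : (0:ℝ) ≤ R 1 1 - 1 + 1/100),
        mul_nonneg s2 (by linarith : (0:ℝ) ≤ 1/100 - (R 2 2 - 1)),
        mul_nonneg s2 (by linarith : (0:ℝ) ≤ R 2 2 - 1 + 1/100),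
        mul_nonneg (by linarith : (0:ℝ) ≤ 1 - ξ 0 * ξ 1) (by linarith : (0:ℝ) ≤ 1/100 - R 0 1),
        mul_nonneg (by linarith : (0:ℝ) ≤ 1 + ξ 0 * ξ 1) (by linarith : (0:ℝ) ≤ R 0 1 + 1/100),
        mul_nonneg (by linarith : (0:ℝ) ≤ 1 - ξ 0 * ξ 1) (by linarith : (0:ℝ) ≤ R 0 1 + 1/100),
        mul_nonneg (by linarith : (0:ℝ) ≤ 1 + ξ 0 * ξ 1) (by linarith : (0:ℝ) ≤ 1/100 - R 0 1),
        mul_nonneg (by linarith : (0:ℝ) ≤ 1 - ξ 0 * ξ 2) (by linarith : (0:ℝ) ≤ 1/100 - R 0 2),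
        mul_nonneg (by linarith : (0:ℝ) ≤ 1 + ξ 0 * ξ 2) (by linarith : (0:ℝ) ≤ R 0 2 + 1/100),
        mul_nonneg (by linarith : (0:ℝ) ≤ 1 - ξ 0 * ξ 2) (by linarith : (0:ℝ) ≤ R 0 2 + 1/100),
        mul_nonneg (by linarith : (0:ℝ) ≤ 1 + ξ 0 * ξ 2) (by linarith : (0:ℝ) ≤ 1/100 - R 0 2),
        mul_nonneg (by linarith : (0:ℝ) ≤ 1 - ξ 1 * ξ 2) (by linarith : (0:ℝ) ≤ 1/100 - R 1 2),
        mul_nonneg (by linarith : (0:ℝ) ≤ 1 + ξ 1 * ξ 2) (by linarith : (0:ℝ) ≤ R 1 2 + 1/100),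
        mul_nonneg (by linarith : (0:ℝ) ≤ 1 - ξ 1 * ξ 2) (by linarith : (0:ℝ) ≤ R 1 2 + 1/100),
        mul_nonneg (by linarith : (0:ℝ) ≤ 1 + ξ 1 * ξ 2) (by linarith : (0:ℝ) ≤ 1/100 - R 1 2)]

lemma gfun_smooth (α : Fin 2) (ξ : Fin 3 → ℝ) :
    ContDiff ℝ (⊤ : ℕ∞) (gfun α ξ) := by
  apply ContDiff.add
  apply ContDiff.add
  · exact contDiff_const.mul
      (((contDiff_apply_apply ℝ ℝ (0 : Fin 3) (0 : Fin 3)).add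
        (contDiff_apply_apply ℝ ℝ (1 : Fin 3) (1 : Fin 3))).add
        (contDiff_apply_apply ℝ ℝ (2 : Fin 3) (2 : Fin 3)))
  · exact contDiff_const.mul
      (((contDiff_const.mul (contDiff_apply_apply ℝ ℝ (0 : Fin 3) (0 : Fin 3))).add
        (contDiff_const.mul (contDiff_apply_apply ℝ ℝ (1 : Fin 3) (1 : Fin 3)))).add
        (contDiff_const.mul (contDiff_apply_apply ℝ ℝ (2 : Fin 3) (2 : Fin 3))))
  · exact contDiff_const.mul
      (((contDiff_const.mul (contDiff_apply_apply ℝ ℝ (0 : Fin 3) (1 : Fin 3))).add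
        (contDiff_const.mul (contDiff_apply_apply ℝ ℝ (0 : Fin 3) (2 : Fin 3)))).add
        (contDiff_const.mul (contDiff_apply_apply ℝ ℝ (1 : Fin 3) (2 : Fin 3))))

set_option maxHeartbeats 4000000 in
/-- The geometric lemma: there exist `r₀ > 0`, disjoint finite symmetric sets `Λ₀, Λ₁` of
rational unit vectors in `ℝ³` of the same cardinality, and smooth strictly positive functions
`γ_ξ^{(α)}` on the closed `r₀`-ball (Frobenius norm) around the identity in the space of
symmetric 3×3 matrices, with `γ_{-ξ}^{(α)} = γ_ξ^{(α)}`, such that every symmetric `R` with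
`‖R − Id‖ ≤ r₀` satisfies `R = (1/2) Σ_{ξ∈Λ_α} (γ_ξ^{(α)}(R))² (Id − ξ ⊗ ξ)`. -/
theorem stmt_8 :
    ∃ r₀ : ℝ, 0 < r₀ ∧
    ∃ (Λ : Fin 2 → Finset (Fin 3 → ℝ))
      (γ : Fin 2 → (Fin 3 → ℝ) → (Fin 3 → Fin 3 → ℝ) → ℝ),
      Disjoint (Λ 0) (Λ 1) ∧
      (Λ 0).card = (Λ 1).card ∧
      (∀ α, ∀ ξ ∈ Λ α, (∑ k, ξ k ^ 2 = 1) ∧ (∀ k, ∃ q : ℚ, ξ k = (q : ℝ)) ∧ -ξ ∈ Λ α) ∧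
      (∀ α, ∀ ξ ∈ Λ α, ∀ R : Fin 3 → Fin 3 → ℝ,
        (∀ k l, R k l = R l k) → frobNorm (R - idMat) ≤ r₀ → 0 < γ α ξ R) ∧
      (∀ α, ∀ ξ ∈ Λ α, ContDiffOn ℝ (⊤ : ℕ∞) (γ α ξ)
        {R : Fin 3 → Fin 3 → ℝ | (∀ k l, R k l = R l k) ∧ frobNorm (R - idMat) ≤ r₀}) ∧
      (∀ α, ∀ ξ ∈ Λ α, γ α (-ξ) = γ α ξ) ∧
      (∀ α, ∀ R : Fin 3 → Fin 3 → ℝ,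
        (∀ k l, R k l = R l k) → frobNorm (R - idMat) ≤ r₀ →
        ∀ k l, R k l = (1 / 2) * ∑ ξ ∈ Λ α, (γ α ξ R) ^ 2 * (idMat k l - ξ k * ξ l)) := by
  refine ⟨1/100, by norm_num, Lam, gam, ?_, ?_, ?_, ?_, ?_, ?_, ?_⟩
  · -- disjointness
    rw [Finset.disjoint_left]
    rintro ξ h0 h1
    simp only [Lam, Finset.mem_image, Finset.mem_univ, true_and] at h0 h1
    obtain ⟨i, hi⟩ := h0
    obtain ⟨j, hj⟩ := h1
    apply wtab_disj i j
    intro k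
    have hk : Vvec 0 i k = Vvec 1 j k := by rw [hi, hj]
    have h5 : ((denv 0 : ℤ) : ℝ) ≠ 0 := (denv_pos 0).ne'
    have h13 : ((denv 1 : ℤ) : ℝ) ≠ 0 := (denv_pos 1).ne'
    simp only [Vvec] at hk
    rw [div_eq_div_iff h5 h13] at hk
    have hk2 : ((13 * wtab 0 i k : ℤ) : ℝ) = ((5 * wtab 1 j k : ℤ) : ℝ) := by
      push_cast
      simp only [denv, Matrix.cons_val_zero, Matrix.cons_val_one, Matrix.head_cons] at hk
      push_cast at hk
      linarith
    exact_mod_cast hk2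
  · -- cardinalities
    show (Finset.image (Vvec 0) Finset.univ).card = (Finset.image (Vvec 1) Finset.univ).card
    rw [Finset.card_image_of_injective _ (Vvec_inj 0),
      Finset.card_image_of_injective _ (Vvec_inj 1)]
  · -- unit vectors, rational, symmetric
    intro α ξ hξ
    simp only [Lam, Finset.mem_image, Finset.mem_univ, true_and] at hξ
    obtain ⟨i, hi⟩ := hξ
    subst hi
    refine ⟨?_, ?_, ?_⟩
    · rw [Fin.sum_univ_three]
      exact Vvec_norm α i
    · intro k
      exact ⟨(wtab α i k : ℚ) / (denv α : ℚ), by push_cast [Vvec]; ring⟩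
    · obtain ⟨j, hj⟩ := wtab_neg α i
      simp only [Lam, Finset.mem_image, Finset.mem_univ, true_and]
      refine ⟨j, ?_⟩
      funext k
      simp only [Vvec, Pi.neg_apply, hj k]
      push_cast
      ring
  · -- positivity
    intro α ξ hξ R _ hb
    simp only [Lam, Finset.mem_image, Finset.mem_univ, true_and] at hξ
    obtain ⟨i, hi⟩ := hξ
    subst hi
    exact Real.sqrt_pos.2 (gfun_pos α (Vvec_norm α i) hb)
  · -- smoothness
    intro α ξ hξ
    simp only [Lam, Finset.mem_image, Finset.mem_univ, true_and] at hξ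
    obtain ⟨i, hi⟩ := hξ
    subst hi
    intro R hR
    have hpos := gfun_pos α (Vvec_norm α i) hR.2
    exact ((Real.contDiffAt_sqrt hpos.ne').comp R
      (gfun_smooth α (Vvec α i)).contDiffAt).contDiffWithinAt
  · -- evenness
    intro α ξ _
    funext R
    simp only [gam, gfun, Pi.neg_apply]
    ring_nf
  · -- the main identity
    intro α R hsym hb k l
    have hsum : ∑ ξ ∈ Lam α, (gam α ξ R) ^ 2 * (idMat k l - ξ k * ξ l)
        = ∑ i : Fin 24, gfun α (Vvec α i) R * (idMat k l - Vvec α i k * Vvec α i l) := by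
      rw [Lam]
      rw [Finset.sum_image (fun i _ j _ h => Vvec_inj α h)]
      refine Finset.sum_congr rfl fun i _ => ?_
      rw [gam, Real.sq_sqrt (gfun_pos α (Vvec_norm α i) hb).le]
    rw [hsum]
    have h10 : R 1 0 = R 0 1 := hsym 1 0
    have h20 : R 2 0 = R 0 2 := hsym 2 0
    have h21 : R 2 1 = R 1 2 := hsym 2 1
    fin_cases α <;> fin_cases k <;> fin_cases l <;>
      · simp only [Fin.sum_univ_succ, Finset.univ_eq_empty, Finset.sum_empty, gfun, Vvec, wtab,
          denv, Ac, Bc, Ec, idMat, Fin.isValue, Fin.mk_zero, Fin.mk_one, Fin.reduceFinMk,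
          Fin.reduceEq, Matrix.cons_val_zero, Matrix.cons_val_one, Matrix.head_cons,
          Matrix.cons_val_succ, Matrix.cons_val_two, Fin.succ_zero_eq_one, if_true, if_false]
        norm_num [h10, h20, h21]
        ring
end
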